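/- Let $\Theta_1 \subseteq \mathbb{R}^d$ be compact and convex, $V$ a fixed positive-definite $d\times d$ matrix, and $\|v\|_V = (v^T V^{-2} v)^{1/2}$. Let $\theta_* \notin \Theta_1$ and let $\theta_0 \in \Theta_1$ satisfy $\|\theta_0 - \theta_*\|_V = \min_{\theta \in \Theta_1} \|\theta - \theta_*\|_V$. Let $g_1 = \sum_{i=1}^m w_i g_{\theta_i}$ be any finite Gaussian mixture with $\theta_i \in \Theta_1$, $w_i \ge 0$, $\sum w_i = 1$, where $g_\theta$ is the density of $\mathcal{N}(\theta,V)$. Then $D_F(G_1 \| G_{\theta_*}) \ge D_F(G_{\theta_0} \| G_{\theta_*}) = \|\theta_0 - \theta_*\|_V^2$. -/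

import Mathlib

open MeasureTheory Matrix Finset

variable {d : ℕ}

/-- Density of the `d`-dimensional Gaussian `N(θ, V)`. -/
noncomputable def gaussDensity (V : Matrix (Fin d) (Fin d) ℝ) (θ x : EuclideanSpace ℝ (Fin d)) :
    ℝ :=
  Real.exp (-(1 / 2) * dotProduct (fun i => x i - θ i) (V⁻¹ *ᵥ fun i => x i - θ i)) /
    Real.sqrt ((2 * Real.pi) ^ d * V.det)

/-- The squared `V`-norm `‖v‖_V² = vᵀ V⁻² v`. -/
noncomputable def sqNormV (V : Matrix (Fin d) (Fin d) ℝ) (v : Fin d → ℝ) : ℝ :=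
  dotProduct v ((V⁻¹ * V⁻¹) *ᵥ v)

/-- Fisher divergence `D_F(P‖Q) = 𝔼_{X∼P}[‖∇ log p(X) − ∇ log q(X)‖²]`, `μP` the law of `P`. -/
noncomputable def fisherDivM (p q : EuclideanSpace ℝ (Fin d) → ℝ)
    (μP : Measure (EuclideanSpace ℝ (Fin d))) : ℝ :=
  ∫ x, ‖gradient (fun y => Real.log (p y)) x - gradient (fun y => Real.log (q y)) x‖ ^ 2 ∂μP

/-! The score of a Gaussian mixture is the Gaussian score at the posterior mean: with
`βᵢ(x) ∝ wᵢ g_{θᵢ}(x)` and `m(x) = ∑ βᵢ(x) θᵢ`, one has `∇ log g₁(x) = V⁻¹ (m(x) - x)`. Hence the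
Fisher integrand of `G₁` against `G_{θ*}` is `‖m(x) - θ*‖_V²`. Since `m(x)` is a convex combination
of the `θᵢ`, it lies in `Θ₁`, so this integrand is pointwise at least `‖θ₀ - θ*‖_V²`, the constant
Fisher integrand of `G_{θ₀}`. It is also bounded, as `m(x)` ranges over the compact convex hull of
the `θᵢ`. -/

open Real InnerProductSpace

section Calculus

variable {E : Type*} [NormedAddCommGroup E] [InnerProductSpace ℝ E] [CompleteSpace E]

theorem IsSelfAdjoint.hasGradientAt_inner_sub_apply_sub {T : E →L[ℝ] E} (hT : IsSelfAdjoint T)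
    (θ x : E) :
    HasGradientAt (fun y => ⟪y - θ, T (y - θ)⟫_ℝ) ((2 : ℝ) • T (x - θ)) x := by
  have hsub : HasFDerivAt (fun y : E => y - θ) (ContinuousLinearMap.id ℝ E) x :=
    (hasFDerivAt_id x).sub_const θ
  have hT' : HasFDerivAt (fun y => T (y - θ)) T x :=
    (T.hasFDerivAt.comp x hsub).congr_fderiv T.comp_id
  rw [hasGradientAt_iff_hasFDerivAt]
  refine (hsub.inner ℝ hT').congr_fderiv ?_
  ext h
  simp only [ContinuousLinearMap.comp_apply, ContinuousLinearMap.prod_apply,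
    ContinuousLinearMap.id_apply, fderivInnerCLM_apply, toDual_apply_apply]
  have hsymm : ⟪x - θ, T h⟫_ℝ = ⟪T (x - θ), h⟫_ℝ := (hT.isSymmetric _ _).symm
  rw [hsymm, two_smul, inner_add_left, real_inner_comm h]

theorem HasGradientAt.of_log {f : E → ℝ} {s x : E} (hf : ∀ y, 0 < f y)
    (h : HasGradientAt (fun y => log (f y)) s x) : HasGradientAt f (f x • s) x := by
  rw [hasGradientAt_iff_hasFDerivAt] at h ⊢
  simpa [exp_log (hf _)] using h.exp

theorem hasGradientAt_log_sum {ι : Type*} (t : Finset ι) {f : ι → E → ℝ} {s : ι → E} {x : E}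
    (hf : ∀ i ∈ t, HasGradientAt (f i) (f i x • s i) x) (hpos : ∑ i ∈ t, f i x ≠ 0) :
    HasGradientAt (fun y => log (∑ i ∈ t, f i y)) (t.centerMass (fun i => f i x) s) x := by
  simp only [hasGradientAt_iff_hasFDerivAt] at hf ⊢
  simpa [Finset.centerMass, map_sum] using (HasFDerivAt.fun_sum hf).log hpos

end Calculus

theorem Continuous.centerMass {X E ι : Type*} [TopologicalSpace X] [NormedAddCommGroup E]
    [NormedSpace ℝ E] (t : Finset ι) {f : ι → X → ℝ} (hf : ∀ i ∈ t, Continuous (f i))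
    (hpos : ∀ x, ∑ i ∈ t, f i x ≠ 0) (z : ι → E) :
    Continuous fun x => t.centerMass (fun i => f i x) z :=
  ((continuous_finsetSum t hf).inv₀ hpos).smul
    (continuous_finsetSum t fun i hi => (hf i hi).smul continuous_const)

theorem Continuous.integrable_of_forall_mem_isCompact {X F : Type*} [TopologicalSpace X]
    [MeasurableSpace X] [OpensMeasurableSpace X] [NormedAddCommGroup F] [SecondCountableTopology F]
    {μ : Measure X} [IsFiniteMeasure μ] {f : X → F} (hf : Continuous f) {K : Set F}
    (hK : IsCompact K) (hfK : ∀ x, f x ∈ K) : Integrable f μ :=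
  have ⟨C, hC⟩ := hK.isBounded.exists_norm_le
  Integrable.of_bound hf.aestronglyMeasurable C (ae_of_all _ fun x => hC _ (hfK x))

section Gaussian

variable {V : Matrix (Fin d) (Fin d) ℝ}

theorem isSelfAdjoint_toEuclideanCLM_inv (hV : V.IsHermitian) :
    IsSelfAdjoint (toEuclideanCLM (𝕜 := ℝ) V⁻¹) :=
  hV.inv.isSelfAdjoint.map _

theorem sqNormV_eq_norm_sq (hV : V.IsHermitian) (v : EuclideanSpace ℝ (Fin d)) :
    sqNormV V v = ‖toEuclideanCLM (𝕜 := ℝ) V⁻¹ v‖ ^ 2 := by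
  set T := toEuclideanCLM (𝕜 := ℝ) V⁻¹
  have hsymm : ⟪T v, T v⟫_ℝ = ⟪v, T (T v)⟫_ℝ :=
    (isSelfAdjoint_toEuclideanCLM_inv hV).isSymmetric _ _
  rw [← real_inner_self_eq_norm_sq, hsymm, ← mul_apply_eq_comp, ← map_mul,
    inner_toEuclideanCLM, sqNormV]

theorem continuous_sqNormV (V : Matrix (Fin d) (Fin d) ℝ) : Continuous (sqNormV V) := by
  unfold sqNormV dotProduct mulVec
  fun_prop

theorem continuous_gaussDensity (V : Matrix (Fin d) (Fin d) ℝ) (θ : EuclideanSpace ℝ (Fin d)) :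
    Continuous (gaussDensity V θ) := by
  unfold gaussDensity dotProduct mulVec
  fun_prop

theorem gaussDensity_pos (hV : V.PosDef) (θ x : EuclideanSpace ℝ (Fin d)) :
    0 < gaussDensity V θ x :=
  div_pos (exp_pos _) (sqrt_pos.2 (mul_pos (by positivity) hV.det_pos))

theorem log_gaussDensity (hV : V.PosDef) (θ x : EuclideanSpace ℝ (Fin d)) :
    log (gaussDensity V θ x) = -(1 / 2) * ⟪x - θ, toEuclideanCLM (𝕜 := ℝ) V⁻¹ (x - θ)⟫_ℝ
      - log (sqrt ((2 * π) ^ d * V.det)) := by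
  rw [gaussDensity, log_div (exp_ne_zero _), log_exp, inner_toEuclideanCLM]
  · rfl
  · exact (sqrt_pos.2 (mul_pos (by positivity) hV.det_pos)).ne'

theorem hasGradientAt_log_gaussDensity (hV : V.PosDef) (θ x : EuclideanSpace ℝ (Fin d)) :
    HasGradientAt (fun y => log (gaussDensity V θ y)) (toEuclideanCLM (𝕜 := ℝ) V⁻¹ (θ - x)) x := by
  simp only [log_gaussDensity hV]
  have hQ := ((isSelfAdjoint_toEuclideanCLM_inv hV.isHermitian).hasGradientAt_inner_sub_apply_sub
    θ x).hasFDerivAt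
  rw [hasGradientAt_iff_hasFDerivAt]
  refine ((hQ.const_mul _).sub_const _).congr_fderiv ?_
  rw [← neg_sub x θ, map_neg, map_neg, map_smul, smul_smul]
  norm_num

theorem sq_norm_sub_gradient_log_eq_sqNormV (hV : V.IsHermitian)
    {p q : EuclideanSpace ℝ (Fin d) → ℝ} {a b x : EuclideanSpace ℝ (Fin d)}
    (hp : HasGradientAt (fun y => log (p y)) (toEuclideanCLM (𝕜 := ℝ) V⁻¹ (a - x)) x)
    (hq : HasGradientAt (fun y => log (q y)) (toEuclideanCLM (𝕜 := ℝ) V⁻¹ (b - x)) x) :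
    ‖gradient (fun y => log (p y)) x - gradient (fun y => log (q y)) x‖ ^ 2 =
      sqNormV V (a - b) := by
  rw [hp.gradient, hq.gradient, ← map_sub, sub_sub_sub_cancel_right, sqNormV_eq_norm_sq hV]
  rfl

end Gaussian

section GaussianMixture

variable {V : Matrix (Fin d) (Fin d) ℝ} {ι : Type*} [Fintype ι] {w : ι → ℝ}

noncomputable def gaussMixtureMean (V : Matrix (Fin d) (Fin d) ℝ) (w : ι → ℝ)
    (θ : ι → EuclideanSpace ℝ (Fin d)) (x : EuclideanSpace ℝ (Fin d)) :
    EuclideanSpace ℝ (Fin d) :=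
  univ.centerMass (fun i => w i * gaussDensity V (θ i) x) θ

theorem gaussMixture_pos (hV : V.PosDef) (hw : ∀ i, 0 ≤ w i) (hw_pos : 0 < ∑ i, w i)
    (θ : ι → EuclideanSpace ℝ (Fin d)) (x : EuclideanSpace ℝ (Fin d)) :
    0 < ∑ i, w i * gaussDensity V (θ i) x := by
  obtain ⟨j, -, hj⟩ := exists_lt_of_sum_lt (s := univ) (f := fun _ => (0 : ℝ))
    (by simpa using hw_pos)
  exact sum_pos' (fun i _ => mul_nonneg (hw i) (gaussDensity_pos hV _ _).le)
    ⟨j, mem_univ j, mul_pos hj (gaussDensity_pos hV _ _)⟩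

theorem gaussMixtureMean_mem_convexHull (hV : V.PosDef) (hw : ∀ i, 0 ≤ w i)
    (hw_pos : 0 < ∑ i, w i) (θ : ι → EuclideanSpace ℝ (Fin d)) (x : EuclideanSpace ℝ (Fin d)) :
    gaussMixtureMean V w θ x ∈ convexHull ℝ (Set.range θ) :=
  univ.centerMass_mem_convexHull (fun i _ => mul_nonneg (hw i) (gaussDensity_pos hV _ _).le)
    (gaussMixture_pos hV hw hw_pos θ x) fun i _ => Set.mem_range_self i

theorem continuous_gaussMixtureMean (hV : V.PosDef) (hw : ∀ i, 0 ≤ w i) (hw_pos : 0 < ∑ i, w i)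
    (θ : ι → EuclideanSpace ℝ (Fin d)) : Continuous (gaussMixtureMean V w θ) :=
  Continuous.centerMass univ (fun i _ => continuous_const.mul (continuous_gaussDensity V (θ i)))
    (fun x => (gaussMixture_pos hV hw hw_pos θ x).ne') θ

theorem hasGradientAt_log_gaussMixture (hV : V.PosDef) (hw : ∀ i, 0 ≤ w i)
    (hw_pos : 0 < ∑ i, w i) (θ : ι → EuclideanSpace ℝ (Fin d)) (x : EuclideanSpace ℝ (Fin d)) :
    HasGradientAt (fun y => log (∑ i, w i * gaussDensity V (θ i) y))
      (toEuclideanCLM (𝕜 := ℝ) V⁻¹ (gaussMixtureMean V w θ x - x)) x := by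
  set T := toEuclideanCLM (𝕜 := ℝ) V⁻¹
  set β := fun i => w i * gaussDensity V (θ i) x
  have hβ : ∑ i, β i ≠ 0 := (gaussMixture_pos hV hw hw_pos θ x).ne'
  have hcomponent : ∀ i ∈ univ, HasGradientAt (fun y => w i * gaussDensity V (θ i) y)
      (β i • T (θ i - x)) x := by
    intro i _
    have := ((hasGradientAt_log_gaussDensity hV (θ i) x).of_log
      (gaussDensity_pos hV (θ i))).hasFDerivAt.const_mul (w i)
    rw [hasGradientAt_iff_hasFDerivAt]
    simpa [β, smul_smul] using this
  have hmean : univ.centerMass β (fun i => T (θ i - x)) = T (gaussMixtureMean V w θ x - x) := by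
    simp only [gaussMixtureMean, Finset.centerMass, map_sub, map_smul, map_sum, smul_sub,
      sum_sub_distrib, ← sum_smul, smul_smul, inv_mul_cancel₀ hβ, one_smul, β]
  rw [← hmean]
  exact hasGradientAt_log_sum univ hcomponent hβ

theorem integrable_sqNormV_gaussMixtureMean_sub (hV : V.PosDef) (hw : ∀ i, 0 ≤ w i)
    (hw_pos : 0 < ∑ i, w i) (θ : ι → EuclideanSpace ℝ (Fin d)) (θs : EuclideanSpace ℝ (Fin d))
    (μ : Measure (EuclideanSpace ℝ (Fin d))) [IsFiniteMeasure μ] :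
    Integrable (fun x => sqNormV V (gaussMixtureMean V w θ x - θs)) μ := by
  have hdist : Continuous fun v : EuclideanSpace ℝ (Fin d) => sqNormV V (v - θs) :=
    (continuous_sqNormV V).comp (by fun_prop)
  exact (hdist.comp (continuous_gaussMixtureMean hV hw hw_pos θ)).integrable_of_forall_mem_isCompact
    (((Set.finite_range θ).isCompact_convexHull ℝ).image hdist)
    fun x => Set.mem_image_of_mem _ (gaussMixtureMean_mem_convexHull hV hw hw_pos θ x)

end GaussianMixture

theorem gaussian_mixture_LFD_general
    (V : Matrix (Fin d) (Fin d) ℝ) (hV : V.PosDef)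
    (Θ1 : Set (EuclideanSpace ℝ (Fin d))) (hconv : Convex ℝ Θ1)
    (θs : EuclideanSpace ℝ (Fin d))
    (θ0 : EuclideanSpace ℝ (Fin d))
    (hproj : ∀ θ ∈ Θ1, Real.sqrt (sqNormV V (fun i => θ0 i - θs i)) ≤
      Real.sqrt (sqNormV V (fun i => θ i - θs i)))
    (m : ℕ) (w : Fin m → ℝ) (θ : Fin m → EuclideanSpace ℝ (Fin d))
    (hw_nonneg : ∀ i, 0 ≤ w i) (hw_sum : ∑ i, w i = 1) (hθmem : ∀ i, θ i ∈ Θ1)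
    (g1 : EuclideanSpace ℝ (Fin d) → ℝ)
    (hg1 : g1 = fun x => ∑ i, w i * gaussDensity V (θ i) x)
    (μ1 μ0 : Measure (EuclideanSpace ℝ (Fin d)))
    [IsProbabilityMeasure μ1] [IsProbabilityMeasure μ0] :
    fisherDivM (gaussDensity V θ0) (gaussDensity V θs) μ0 ≤
        fisherDivM g1 (gaussDensity V θs) μ1 ∧
      fisherDivM (gaussDensity V θ0) (gaussDensity V θs) μ0 =
        sqNormV V (fun i => θ0 i - θs i) := by
  subst hg1
  have hw_pos : 0 < ∑ i, w i := hw_sum ▸ one_pos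
  set mean := gaussMixtureMean V w θ
  have hfisher0 : fisherDivM (gaussDensity V θ0) (gaussDensity V θs) μ0 = sqNormV V (θ0 - θs) := by
    simp only [fisherDivM, sq_norm_sub_gradient_log_eq_sqNormV hV.isHermitian
      (hasGradientAt_log_gaussDensity hV θ0 _) (hasGradientAt_log_gaussDensity hV θs _),
      integral_const, probReal_univ, one_smul]
  refine ⟨?_, hfisher0⟩
  have hscore : ∀ x, ‖gradient (fun y => log (∑ i, w i * gaussDensity V (θ i) y)) x -
      gradient (fun y => log (gaussDensity V θs y)) x‖ ^ 2 = sqNormV V (mean x - θs) := fun x =>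
    sq_norm_sub_gradient_log_eq_sqNormV hV.isHermitian
      (hasGradientAt_log_gaussMixture hV hw_nonneg hw_pos θ x)
      (hasGradientAt_log_gaussDensity hV θs x)
  have hbound : ∀ x, sqNormV V (θ0 - θs) ≤ sqNormV V (mean x - θs) := fun x =>
    (sqrt_le_sqrt_iff (by rw [sqNormV_eq_norm_sq hV.isHermitian]; positivity)).1 <|
      hproj _ (convexHull_min (Set.range_subset_iff.2 hθmem) hconv
        (gaussMixtureMean_mem_convexHull hV hw_nonneg hw_pos θ x))
  calc fisherDivM (gaussDensity V θ0) (gaussDensity V θs) μ0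
      = ∫ _, sqNormV V (θ0 - θs) ∂μ1 := by rw [hfisher0, integral_const, probReal_univ, one_smul]
    _ ≤ ∫ x, sqNormV V (mean x - θs) ∂μ1 := integral_mono (integrable_const _)
        (integrable_sqNormV_gaussMixtureMean_sub hV hw_nonneg hw_pos θ θs μ1) hbound
    _ = _ := by simp only [fisherDivM, hscore]

/-- the Gaussian `N(θ₀, V)` with `θ₀` the `‖·‖_V`-projection of `θ*` onto the
compact convex set `Θ₁` is least favorable among all finite Gaussian mixtures over `Θ₁`:
`D_F(G₁‖G_{θ*}) ≥ D_F(G_{θ₀}‖G_{θ*}) = ‖θ₀ − θ*‖_V²`. -/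
theorem gaussian_mixture_LFD
    (V : Matrix (Fin d) (Fin d) ℝ) (hV : V.PosDef)
    (Θ1 : Set (EuclideanSpace ℝ (Fin d))) (hcmpt : IsCompact Θ1) (hconv : Convex ℝ Θ1)
    (θs : EuclideanSpace ℝ (Fin d)) (hθs : θs ∉ Θ1)
    (θ0 : EuclideanSpace ℝ (Fin d)) (hθ0 : θ0 ∈ Θ1)
    (hproj : ∀ θ ∈ Θ1, Real.sqrt (sqNormV V (fun i => θ0 i - θs i)) ≤
      Real.sqrt (sqNormV V (fun i => θ i - θs i)))
    (m : ℕ) (hm : 1 ≤ m) (w : Fin m → ℝ) (θ : Fin m → EuclideanSpace ℝ (Fin d))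
    (hw_nonneg : ∀ i, 0 ≤ w i) (hw_sum : ∑ i, w i = 1) (hθmem : ∀ i, θ i ∈ Θ1)
    (g1 : EuclideanSpace ℝ (Fin d) → ℝ)
    (hg1 : g1 = fun x => ∑ i, w i * gaussDensity V (θ i) x)
    (μ1 μ0 : Measure (EuclideanSpace ℝ (Fin d)))
    [IsProbabilityMeasure μ1] [IsProbabilityMeasure μ0]
    (hμ1 : μ1 = volume.withDensity (fun x => ENNReal.ofReal (g1 x)))
    (hμ0 : μ0 = volume.withDensity (fun x => ENNReal.ofReal (gaussDensity V θ0 x))) :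
    fisherDivM (gaussDensity V θ0) (gaussDensity V θs) μ0 ≤
        fisherDivM g1 (gaussDensity V θs) μ1 ∧
      fisherDivM (gaussDensity V θ0) (gaussDensity V θs) μ0 =
        sqNormV V (fun i => θ0 i - θs i) :=
  gaussian_mixture_LFD_general V hV Θ1 hconv θs θ0 hproj m w θ hw_nonneg hw_sum hθmem g1 hg1 μ1 μ0
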